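/- Consider the bouncing ball hybrid system H = (C,F,D,G) on X = ℝ² with state x = (x₁,x₂), flow map F(x) = {(x₂, −γ)} on the flow set C = {x ∈ ℝ² : x₁ ≥ 0}, and jump map G(x) = {(0, −λx₂)} on the jump set D = {x ∈ ℝ² : x₁ = 0, x₂ ≤ 0}, where γ > 0 and λ ∈ [0,1]. Let K = {x ∈ C ∪ D : 2γx₁ + (x₂ − 1)(x₂ + 1) ≤ 0}, i.e., the sublevel set where the total energy γx₁ + x₂²/2 is at most 1/2. Then K is forward pre-invariant for H: every solution φ to H with φ(0,0) ∈ K satisfies φ(t,j) ∈ K for all (t,j) ∈ dom φ. -/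

import Mathlib

open Set Filter Topology MeasureTheory
open scoped ENNReal NNReal

noncomputable section

/-- The state space `ℝⁿ`. -/
abbrev ES (n : ℕ) := EuclideanSpace ℝ (Fin n)

/-- A hybrid system `H = (C,F,D,G)` on a state space `X ⊆ ℝⁿ`. -/
structure HybridSystem (n : ℕ) where
  X : Set (ES n)
  C : Set (ES n)
  F : ES n → Set (ES n)
  D : Set (ES n)
  G : ES n → Set (ES n)
  C_subset_X : C ⊆ X
  D_subset_X : D ⊆ X
  data_subset_X : closure C ∪ D ∪ (⋃ x ∈ D, G x) ⊆ X

/-- A hybrid time domain `E ⊆ [0,∞) × ℕ`. -/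
def IsHybridTimeDomain (E : Set (ℝ × ℕ)) : Prop :=
  (∀ q ∈ E, 0 ≤ q.1) ∧
  ∀ q ∈ E, ∃ τ : ℕ → ℝ, τ 0 = 0 ∧ τ (q.2 + 1) = q.1 ∧
    (∀ i : ℕ, i ≤ q.2 → τ i ≤ τ (i + 1)) ∧
    (∀ s : ℝ, ∀ j : ℕ, ((s, j) ∈ E ∧ s ≤ q.1 ∧ j ≤ q.2) ↔ (j ≤ q.2 ∧ τ j ≤ s ∧ s ≤ τ (j + 1)))

/-- A hybrid arc: a function defined on a hybrid time domain. -/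
structure HybridArc (n : ℕ) where
  dom : Set (ℝ × ℕ)
  toFun : ℝ → ℕ → ES n
  htd : IsHybridTimeDomain dom
  zero_mem : ((0 : ℝ), (0 : ℕ)) ∈ dom

variable {n : ℕ}

/-- `s` is a solution to the hybrid system `H`: the initial condition lies in
`closure C ∪ D`; on each interval `I^j` the arc is (locally) absolutely continuous,
i.e. it is the integral of an integrable selection `f` with `f t ∈ F (φ t j)` a.e.,
and `φ t j ∈ C` on the interior of `I^j`; and jumps satisfy the jump conditions. -/
structure IsSolution (H : HybridSystem n) (s : HybridArc n) : Prop where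
  init : s.toFun 0 0 ∈ closure H.C ∪ H.D
  flow : ∀ j : ℕ, ∃ f : ℝ → ES n,
    (∀ t ∈ interior {t : ℝ | (t, j) ∈ s.dom}, s.toFun t j ∈ H.C) ∧
    (∀ᵐ t ∂volume, (t, j) ∈ s.dom → f t ∈ H.F (s.toFun t j)) ∧
    (∀ a b : ℝ, (a, j) ∈ s.dom → (b, j) ∈ s.dom →
      IntervalIntegrable f volume a b ∧ s.toFun b j = s.toFun a j + ∫ u in a..b, f u)
  jump : ∀ t : ℝ, ∀ j : ℕ, (t, j) ∈ s.dom → (t, j + 1) ∈ s.dom →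
    s.toFun t j ∈ H.D ∧ s.toFun t (j + 1) ∈ H.G (s.toFun t j)

/-- `s` is a maximal solution to `H`: it is a solution that is not a proper
restriction of another solution. -/
def IsMaximal (H : HybridSystem n) (s : HybridArc n) : Prop :=
  IsSolution H s ∧
  ∀ s' : HybridArc n, IsSolution H s' → s.dom ⊆ s'.dom →
    (∀ q ∈ s.dom, s'.toFun q.1 q.2 = s.toFun q.1 q.2) → s'.dom = s.dom

/-- `s` satisfies `□ p` at `(t,j)`, where `K` is the truth set of `p`. -/
def SatAlwaysAt (s : HybridArc n) (K : Set (ES n)) (t : ℝ) (j : ℕ) : Prop :=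
  ∀ t' : ℝ, ∀ j' : ℕ, (t', j') ∈ s.dom → t + (j : ℝ) ≤ t' + (j' : ℝ) → s.toFun t' j' ∈ K

/-- `s` satisfies `◇ p` at `(t,j)`, where `K` is the truth set of `p`. -/
def SatEventuallyAt (s : HybridArc n) (K : Set (ES n)) (t : ℝ) (j : ℕ) : Prop :=
  ∃ t' : ℝ, ∃ j' : ℕ, (t', j') ∈ s.dom ∧ t + (j : ℝ) ≤ t' + (j' : ℝ) ∧ s.toFun t' j' ∈ K

/-- `s` satisfies `○ p` at `(t,j)`, where `K` is the truth set of `p`. -/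
def SatNextAt (s : HybridArc n) (K : Set (ES n)) (t : ℝ) (j : ℕ) : Prop :=
  (t, j + 1) ∈ s.dom ∧ s.toFun t (j + 1) ∈ K

/-- `s` satisfies `p U_s q` at `(t,j)`, where `P`, `Q` are the truth sets of `p`, `q`. -/
def SatUntilSAt (s : HybridArc n) (P Q : Set (ES n)) (t : ℝ) (j : ℕ) : Prop :=
  ∃ t' : ℝ, ∃ j' : ℕ, (t', j') ∈ s.dom ∧ t + (j : ℝ) ≤ t' + (j' : ℝ) ∧ s.toFun t' j' ∈ Q ∧
    ∀ t'' : ℝ, ∀ j'' : ℕ, (t'', j'') ∈ s.dom →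
      t + (j : ℝ) ≤ t'' + (j'' : ℝ) → t'' + (j'' : ℝ) < t' + (j' : ℝ) → s.toFun t'' j'' ∈ P

/-- `s` satisfies `p U_w q` at `(t,j)`. -/
def SatUntilWAt (s : HybridArc n) (P Q : Set (ES n)) (t : ℝ) (j : ℕ) : Prop :=
  (∀ t' : ℝ, ∀ j' : ℕ, (t', j') ∈ s.dom → t + (j : ℝ) ≤ t' + (j' : ℝ) → s.toFun t' j' ∈ P) ∨
  SatUntilSAt s P Q t j

/-- `s` satisfies `◇ □ p` at `(t,j)`, where `K` is the truth set of `p`. -/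
def SatEvAlwaysAt (s : HybridArc n) (K : Set (ES n)) (t : ℝ) (j : ℕ) : Prop :=
  ∃ t' : ℝ, ∃ j' : ℕ, (t', j') ∈ s.dom ∧ t + (j : ℝ) ≤ t' + (j' : ℝ) ∧
    ∀ t'' : ℝ, ∀ j'' : ℕ, (t'', j'') ∈ s.dom → t' + (j' : ℝ) ≤ t'' + (j'' : ℝ) →
      s.toFun t'' j'' ∈ K

/-- The settling time `T(φ) = inf {t+j : (t,j) ∈ dom φ, φ(t,j) ∈ K}` (with `inf ∅ = ∞`). -/
def settlingTime (s : HybridArc n) (K : Set (ES n)) : ℝ≥0∞ :=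
  sInf {e : ℝ≥0∞ | ∃ t : ℝ, ∃ j : ℕ, (t, j) ∈ s.dom ∧ s.toFun t j ∈ K ∧
    e = ENNReal.ofReal (t + (j : ℝ))}

/-- `sup_{(t,j) ∈ dom φ} (t + j)`. -/
def domSupTJ (s : HybridArc n) : ℝ≥0∞ := ⨆ q ∈ s.dom, ENNReal.ofReal (q.1 + (q.2 : ℝ))

/-- `sup_{(t,j) ∈ dom φ} t`. -/
def domSupT (s : HybridArc n) : ℝ≥0∞ := ⨆ q ∈ s.dom, ENNReal.ofReal q.1

/-- `sup_{(t,j) ∈ dom φ} j`. -/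
def domSupJ (s : HybridArc n) : ℝ≥0∞ := ⨆ q ∈ s.dom, (q.2 : ℝ≥0∞)

/-- The closed set `K` is finite time attractive (FTA) for `H` with respect to `O`:
every maximal solution from `O` satisfies `sup_{(t,j) ∈ dom φ} (t+j) ≥ T(φ)` and
`dist(φ(t,j),K) → 0` as `t+j ↗ T(φ)` along `(t,j) ∈ dom φ`. -/
def FTAwrt (H : HybridSystem n) (K O : Set (ES n)) : Prop :=
  ∀ s : HybridArc n, IsMaximal H s → s.toFun 0 0 ∈ O →
    settlingTime s K ≤ domSupTJ s ∧
    Tendsto (fun q : ℝ × ℕ => Metric.infDist (s.toFun q.1 q.2) K)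
      ((Filter.comap (fun q : ℝ × ℕ => ENNReal.ofReal (q.1 + (q.2 : ℝ)))
        (𝓝[<] (settlingTime s K))) ⊓ 𝓟 s.dom) (𝓝 0)

/-- The Clarke generalized directional derivative
`V°(x,v) = limsup_{y → x, h ↓ 0} (V(y + h v) − V(y))/h`. -/
def clarkeDeriv (V : ES n → ℝ) (x v : ES n) : ℝ :=
  limsup (fun q : ES n × ℝ => (V (q.1 + q.2 • v) - V q.1) / q.2) ((𝓝 x) ×ˢ (𝓝[>] (0 : ℝ)))

/-- `u_C(x) ≤ b`, i.e. `sup_{v ∈ F(x)} V°(x,v) ≤ b`. -/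
def uC_le (H : HybridSystem n) (V : ES n → ℝ) (x : ES n) (b : ℝ) : Prop :=
  ∀ v ∈ H.F x, clarkeDeriv V x v ≤ b

/-- `u_D(x) ≤ b`, i.e. `sup_{ζ ∈ G(x)} V(ζ) − V(x) ≤ b`. -/
def uD_le (H : HybridSystem n) (V : ES n → ℝ) (x : ES n) (b : ℝ) : Prop :=
  ∀ ζ ∈ H.G x, V ζ - V x ≤ b

/-- `V` is positive definite with respect to `K` (on `N`). -/
def PosDefWrt (V : ES n → ℝ) (K N : Set (ES n)) : Prop :=
  (∀ x ∈ K ∩ N, V x = 0) ∧ ∀ x ∈ N \ K, 0 < V x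

/-- `V` is locally Lipschitz on an open neighborhood of `S`. -/
def LocallyLipschitzOnNhdOf (V : ES n → ℝ) (S : Set (ES n)) : Prop :=
  ∃ U : Set (ES n), IsOpen U ∧ S ⊆ U ∧
    ∀ x ∈ U, ∃ L : ℝ≥0, ∃ W ∈ 𝓝 x, LipschitzOnWith L V W

/-- The sublevel set `L_V(r) = {x ∈ N : V(x) ≤ r}` for `r ∈ [0,∞]`. -/
def sublevel (V : ES n → ℝ) (N : Set (ES n)) (r : ℝ≥0∞) : Set (ES n) :=
  {x ∈ N | ENNReal.ofReal (V x) ≤ r}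

/-- `F` is outer semicontinuous on `S`. -/
def OuterSemicontinuousOn (F : ES n → Set (ES n)) (S : Set (ES n)) : Prop :=
  ∀ x ∈ S, ∀ xs : ℕ → ES n, ∀ ys : ℕ → ES n, (∀ i, xs i ∈ S) → (∀ i, ys i ∈ F (xs i)) →
    Tendsto xs atTop (𝓝 x) → ∀ y : ES n, Tendsto ys atTop (𝓝 y) → y ∈ F x

/-- `F` is locally bounded on `S`. -/
def LocallyBoundedOn (F : ES n → Set (ES n)) (S : Set (ES n)) : Prop :=
  ∀ x ∈ S, ∃ U ∈ 𝓝 x, Bornology.IsBounded (⋃ z ∈ U ∩ S, F z)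

/-- The (Bouligand) tangent cone `T_S(x)`: all `w` for which there exist `x_i ∈ S`,
`x_i → x`, `τ_i > 0`, `τ_i ↓ 0` with `(x_i − x)/τ_i → w`. -/
def BouligandTangentCone (S : Set (ES n)) (x : ES n) : Set (ES n) :=
  {w | ∃ xs : ℕ → ES n, ∃ τ : ℕ → ℝ, (∀ i, xs i ∈ S) ∧ (∀ i, 0 < τ i) ∧
    Tendsto xs atTop (𝓝 x) ∧ Tendsto τ atTop (𝓝 0) ∧
    Tendsto (fun i => (τ i)⁻¹ • (xs i - x)) atTop (𝓝 w)}

/-- `B` is a barrier function candidate with respect to `K` for `H`. -/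
def BarrierCandidate (H : HybridSystem n) (B : ES n → ℝ) (K : Set (ES n)) : Prop :=
  (∀ x ∈ K, B x ≤ 0) ∧
  ∀ x ∈ (H.C ∪ H.D ∪ ⋃ y ∈ H.D, H.G y) \ K, 0 < B x

/-- The set-valued map `F` is locally Lipschitz on `S`. -/
def SetValuedLocallyLipschitzOn (F : ES n → Set (ES n)) (S : Set (ES n)) : Prop :=
  ∀ x ∈ S, ∃ L : ℝ, 0 ≤ L ∧ ∃ U ∈ 𝓝 x,
    ∀ y ∈ U ∩ S, ∀ z ∈ U ∩ S, ∀ v ∈ F y, ∃ w ∈ F z, ‖v - w‖ ≤ L * ‖y - z‖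

/-!
Along a flow interval the ball moves ballistically, `x₂(t) = x₂(a) - γ (t - a)` and
`x₁(t) = x₁(a) + x₂(a) (t - a) - γ (t - a)² / 2`, so the energy `γ x₁ + x₂² / 2` is conserved;
a jump sets `x₁ = 0` and multiplies `x₂` by `-λ`, which cannot increase it. A flowing arc lies in
`C` on the interior of its interval, hence in the closed set `C` at the endpoints. Induction along
the jump times of the hybrid time domain then keeps the whole solution in `K`.
-/

theorem EuclideanSpace.intervalIntegral_apply {f : ℝ → ES n} {a b : ℝ}
    (hf : IntervalIntegrable f volume a b) (i : Fin n) :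
    (∫ u in a..b, f u) i = ∫ u in a..b, f u i :=
  ((EuclideanSpace.proj i).intervalIntegral_comp_comm hf).symm

namespace HybridArc

theorem forall_mem_of_flow_of_jump (s : HybridArc n) {S : Set (ES n)}
    (h0 : s.toFun 0 0 ∈ S)
    (hflow : ∀ j a b, a ≤ b → (∀ u ∈ Icc a b, (u, j) ∈ s.dom) →
      s.toFun a j ∈ S → s.toFun b j ∈ S)
    (hjump : ∀ t j, (t, j) ∈ s.dom → (t, j + 1) ∈ s.dom →
      s.toFun t j ∈ S → s.toFun t (j + 1) ∈ S) :
    ∀ q ∈ s.dom, s.toFun q.1 q.2 ∈ S := by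
  rintro ⟨t, j⟩ hq
  obtain ⟨τ, hτ0, hτt, hτmono, hmem⟩ := s.htd.2 (t, j) hq
  have hseg : ∀ i ≤ j, ∀ u ∈ Icc (τ i) (τ (i + 1)), (u, i) ∈ s.dom := fun i hi u hu =>
    ((hmem u i).mpr ⟨hi, hu⟩).1
  have hstart : ∀ i ≤ j, s.toFun (τ i) i ∈ S := by
    intro i
    induction i with
    | zero => intro _; rwa [hτ0]
    | succ i ih =>
      intro hi
      have hflow_end : s.toFun (τ (i + 1)) i ∈ S :=
        hflow i _ _ (hτmono i (by omega)) (hseg i (by omega)) (ih (by omega))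
      exact hjump _ i (hseg i (by omega) _ ⟨hτmono i (by omega), le_rfl⟩)
        (hseg (i + 1) hi _ ⟨le_rfl, hτmono (i + 1) hi⟩) hflow_end
  have hfinal := hflow j _ _ (hτmono j le_rfl) (hseg j le_rfl) (hstart j le_rfl)
  rwa [hτt] at hfinal

end HybridArc

namespace IsSolution

variable {H : HybridSystem n} {s : HybridArc n} {j : ℕ} {a b : ℝ}

theorem continuousOn_flow (hs : IsSolution H s) (hdom : ∀ u ∈ Icc a b, (u, j) ∈ s.dom) :
    ContinuousOn (fun t => s.toFun t j) (Icc a b) := by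
  rcases lt_or_ge b a with hba | hab
  · simp [Icc_eq_empty_of_lt hba]
  obtain ⟨f, -, -, hint⟩ := hs.flow j
  have ha := hdom a ⟨le_rfl, hab⟩
  have hprim : ContinuousOn (fun t => s.toFun a j + ∫ u in a..t, f u) (Icc a b) := by
    have := intervalIntegral.continuousOn_primitive_interval'
      (hint a b ha (hdom b ⟨hab, le_rfl⟩)).1 left_mem_uIcc
    rw [uIcc_of_le hab] at this
    exact continuousOn_const.add this
  exact hprim.congr fun t ht => (hint a t ha (hdom t ht)).2

theorem mem_closure_flowSet (hs : IsSolution H s) (hab : a < b)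
    (hdom : ∀ u ∈ Icc a b, (u, j) ∈ s.dom) : s.toFun b j ∈ closure H.C := by
  obtain ⟨-, hflow_C, -, -⟩ := hs.flow j
  have hIoo : Ioo a b ⊆ interior {t : ℝ | (t, j) ∈ s.dom} :=
    interior_maximal (fun u hu => hdom u (Ioo_subset_Icc_self hu)) isOpen_Ioo
  have hb : b ∈ closure (Ioo a b) := by rw [closure_Ioo hab.ne]; exact right_mem_Icc.2 hab.le
  have hcont := ((hs.continuousOn_flow hdom) b (right_mem_Icc.2 hab.le)).mono Ioo_subset_Icc_self
  exact closure_mono (image_subset_iff.2 fun u hu => hflow_C u (hIoo hu))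
    (hcont.mem_closure_image hb)

theorem coord_eq_add_integral (hs : IsSolution H s) (hdom : ∀ u ∈ Icc a b, (u, j) ∈ s.dom)
    {i : Fin n} {g : ℝ → ℝ} (hg : ∀ u ∈ Icc a b, ∀ v ∈ H.F (s.toFun u j), v i = g u) :
    ∀ t ∈ Icc a b, s.toFun t j i = s.toFun a j i + ∫ u in a..t, g u := by
  intro t ht
  obtain ⟨f, -, hf, hint⟩ := hs.flow j
  obtain ⟨hfi, heq⟩ := hint a t (hdom a ⟨le_rfl, ht.1.trans ht.2⟩) (hdom t ht)
  have hfg : ∀ᵐ u, u ∈ uIoc a t → f u i = g u := by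
    filter_upwards [hf] with u hu hmem
    rw [uIoc_of_le ht.1] at hmem
    have hu' : u ∈ Icc a b := ⟨hmem.1.le, hmem.2.trans ht.2⟩
    exact hg u hu' _ (hu (hdom u hu'))
  rw [heq, PiLp.add_apply, EuclideanSpace.intervalIntegral_apply hfi,
    intervalIntegral.integral_congr_ae hfg]

end IsSolution

namespace BouncingBall

def energy (γ : ℝ) (x : ES 2) : ℝ := γ * x 0 + x 1 ^ 2 / 2

variable {γ : ℝ} {H : HybridSystem 2} {s : HybridArc 2} {j : ℕ} {a b : ℝ}

theorem velocity_eq (hF : ∀ x : ES 2, H.F x = {v : ES 2 | v 0 = x 1 ∧ v 1 = -γ})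
    (hs : IsSolution H s) (hdom : ∀ u ∈ Icc a b, (u, j) ∈ s.dom) :
    ∀ t ∈ Icc a b, s.toFun t j 1 = s.toFun a j 1 - γ * (t - a) := by
  intro t ht
  rw [hs.coord_eq_add_integral hdom (g := fun _ => -γ)
    (fun u _ v hv => by rw [hF] at hv; exact hv.2) t ht]
  simp only [intervalIntegral.integral_const, smul_eq_mul]
  ring

theorem position_eq (hF : ∀ x : ES 2, H.F x = {v : ES 2 | v 0 = x 1 ∧ v 1 = -γ})
    (hs : IsSolution H s) (hdom : ∀ u ∈ Icc a b, (u, j) ∈ s.dom) :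
    ∀ t ∈ Icc a b,
      s.toFun t j 0 = s.toFun a j 0 + s.toFun a j 1 * (t - a) - γ * (t - a) ^ 2 / 2 := by
  intro t ht
  rw [hs.coord_eq_add_integral hdom (g := fun u => s.toFun a j 1 - γ * (u - a))
    (fun u hu v hv => by rw [hF] at hv; rw [hv.1, velocity_eq hF hs hdom u hu]) t ht]
  rw [intervalIntegral.integral_comp_sub_right (fun u => s.toFun a j 1 - γ * u),
    intervalIntegral.integral_sub intervalIntegrable_const
      (intervalIntegral.intervalIntegrable_id.const_mul γ),
    intervalIntegral.integral_const_mul, integral_id, intervalIntegral.integral_const]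
  simp only [smul_eq_mul]
  ring

theorem energy_flow_eq (hF : ∀ x : ES 2, H.F x = {v : ES 2 | v 0 = x 1 ∧ v 1 = -γ})
    (hs : IsSolution H s) (hab : a ≤ b) (hdom : ∀ u ∈ Icc a b, (u, j) ∈ s.dom) :
    energy γ (s.toFun b j) = energy γ (s.toFun a j) := by
  have hb : b ∈ Icc a b := ⟨hab, le_rfl⟩
  rw [energy, energy, position_eq hF hs hdom b hb, velocity_eq hF hs hdom b hb]
  ring

theorem energy_jump_le {lam : ℝ} (hlam : |lam| ≤ 1) {x y : ES 2} (hx : x 0 = 0)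
    (hy₀ : y 0 = 0) (hy₁ : y 1 = -lam * x 1) : energy γ y ≤ energy γ x := by
  have hlam_sq : lam ^ 2 ≤ 1 := sq_le_one_iff_abs_le_one lam |>.2 hlam
  rw [energy, energy, hx, hy₀, hy₁]
  nlinarith [sq_nonneg (x 1)]

theorem flow_mem (hC : H.C = {x : ES 2 | 0 ≤ x 0})
    (hF : ∀ x : ES 2, H.F x = {v : ES 2 | v 0 = x 1 ∧ v 1 = -γ})
    (hs : IsSolution H s) (hab : a ≤ b) (hdom : ∀ u ∈ Icc a b, (u, j) ∈ s.dom)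
    (ha : s.toFun a j ∈ {x ∈ H.C ∪ H.D | energy γ x ≤ 1 / 2}) :
    s.toFun b j ∈ {x ∈ H.C ∪ H.D | energy γ x ≤ 1 / 2} := by
  refine ⟨?_, energy_flow_eq hF hs hab hdom ▸ ha.2⟩
  rcases hab.eq_or_lt with rfl | hlt
  · exact ha.1
  · have hC_closed : IsClosed H.C := hC ▸ isClosed_le continuous_const (by fun_prop)
    exact Or.inl (hC_closed.closure_subset (hs.mem_closure_flowSet hlt hdom))

theorem jump_mem {lam : ℝ} (hlam : |lam| ≤ 1) (hC : H.C = {x : ES 2 | 0 ≤ x 0})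
    (hD : H.D = {x : ES 2 | x 0 = 0 ∧ x 1 ≤ 0})
    (hG : ∀ x : ES 2, H.G x = {v : ES 2 | v 0 = 0 ∧ v 1 = -lam * x 1})
    (hs : IsSolution H s) {t : ℝ} (ht : (t, j) ∈ s.dom) (ht' : (t, j + 1) ∈ s.dom)
    (hmem : s.toFun t j ∈ {x ∈ H.C ∪ H.D | energy γ x ≤ 1 / 2}) :
    s.toFun t (j + 1) ∈ {x ∈ H.C ∪ H.D | energy γ x ≤ 1 / 2} := by
  obtain ⟨hD_mem, hG_mem⟩ := hs.jump t j ht ht'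
  rw [hD] at hD_mem
  rw [hG] at hG_mem
  refine ⟨Or.inl (hC ▸ hG_mem.1.ge), ?_⟩
  exact (energy_jump_le hlam hD_mem.1 hG_mem.1 hG_mem.2).trans hmem.2

end BouncingBall

theorem bouncing_ball_forward_pre_invariant_general
    (γ lam : ℝ) (hlam : lam ∈ Icc (0 : ℝ) 1)
    (H : HybridSystem 2)
    (hC : H.C = {x : ES 2 | 0 ≤ x 0})
    (hF : ∀ x : ES 2, H.F x = {v : ES 2 | v 0 = x 1 ∧ v 1 = -γ})
    (hD : H.D = {x : ES 2 | x 0 = 0 ∧ x 1 ≤ 0})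
    (hG : ∀ x : ES 2, H.G x = {v : ES 2 | v 0 = 0 ∧ v 1 = -lam * x 1})
    (K : Set (ES 2))
    (hK : K = {x ∈ H.C ∪ H.D | 2 * γ * x 0 + (x 1 - 1) * (x 1 + 1) ≤ 0}) :
    ∀ s : HybridArc 2, IsSolution H s → s.toFun 0 0 ∈ K →
      ∀ q ∈ s.dom, s.toFun q.1 q.2 ∈ K := by
  have hK_energy : K = {x ∈ H.C ∪ H.D | BouncingBall.energy γ x ≤ 1 / 2} := by
    rw [hK]
    congr! 3 with x
    rw [BouncingBall.energy]
    constructor <;> intro h <;> linarith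
  have hlam_abs : |lam| ≤ 1 := (abs_of_nonneg hlam.1).symm ▸ hlam.2
  subst hK_energy
  intro s hs h0
  exact s.forall_mem_of_flow_of_jump h0
    (fun _ _ _ hab hdom ha => BouncingBall.flow_mem hC hF hs hab hdom ha)
    (fun _ _ ht ht' hmem => BouncingBall.jump_mem hlam_abs hC hD hG hs ht ht' hmem)

/-- the energy sublevel set `K` of the bouncing ball is forward
pre-invariant. -/
theorem bouncing_ball_forward_pre_invariant
    (γ lam : ℝ) (hγ : 0 < γ) (hlam : lam ∈ Icc (0 : ℝ) 1)
    (H : HybridSystem 2)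
    (hX : H.X = univ)
    (hC : H.C = {x : ES 2 | 0 ≤ x 0})
    (hF : ∀ x : ES 2, H.F x = {v : ES 2 | v 0 = x 1 ∧ v 1 = -γ})
    (hD : H.D = {x : ES 2 | x 0 = 0 ∧ x 1 ≤ 0})
    (hG : ∀ x : ES 2, H.G x = {v : ES 2 | v 0 = 0 ∧ v 1 = -lam * x 1})
    (K : Set (ES 2))
    (hK : K = {x ∈ H.C ∪ H.D | 2 * γ * x 0 + (x 1 - 1) * (x 1 + 1) ≤ 0}) :
    ∀ s : HybridArc 2, IsSolution H s → s.toFun 0 0 ∈ K →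
      ∀ q ∈ s.dom, s.toFun q.1 q.2 ∈ K :=
  bouncing_ball_forward_pre_invariant_general γ lam hlam H hC hF hD hG K hK
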